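/- arXiv:1910.12250 — 4 statements merged into one kernel-verified Lean document; each statement's English description precedes it below -/
import Mathlib

section
/- For ω > 1/4 and Ê = Ē₁ := (1/27)(36ω − ((12ω + 1)³)^{1/2} − 1), the discriminant-type quantity satisfies: the cubic t³ + (1/2 − 2ω)t² − Ē₁ t + Ē₁²/2 has a repeated positive root, i.e. there exists t₀ > 0 with the cubic and its derivative both vanishing at t₀. -/
/-!
Substituting `s = √(12ω + 1)`, so that `ω = (s² - 1)/12`, the tangency energy becomes the
polynomial `Ē₁ = -(s - 2)²(s + 1)/27`, and `t₀ = (s - 2)(s + 1)/9` is a common root of the cubic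
and its derivative, as a polynomial identity in `s`. The condition `ω > 1/4` is `s > 2`, which
makes `t₀` positive.
-/

lemma Real.sqrt_pow_of_nonneg {x : ℝ} (hx : 0 ≤ x) (n : ℕ) : √(x ^ n) = √x ^ n := by
  rw [← Real.sqrt_sq (pow_nonneg (Real.sqrt_nonneg x) n), ← pow_mul, mul_comm, pow_mul,
    Real.sq_sqrt hx]

theorem cubic_double_root_of_sq_eq (s ω E : ℝ) (hs : s ^ 2 = 12 * ω + 1)
    (hE : E = -((s - 2) ^ 2 * (s + 1)) / 27) :
    let t₀ := (s - 2) * (s + 1) / 9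
    t₀^3 + (1/2 - 2 * ω) * t₀^2 - E * t₀ + E^2 / 2 = 0 ∧
      3 * t₀^2 + 2 * (1/2 - 2 * ω) * t₀ - E = 0 := by
  obtain rfl : ω = (s ^ 2 - 1) / 12 := by linarith
  subst hE
  constructor <;> ring

theorem tangency_energy_eq (ω : ℝ) (hω : 0 ≤ 12 * ω + 1) :
    (1/27) * (36 * ω - √((12 * ω + 1)^3) - 1) =
      -((√(12 * ω + 1) - 2) ^ 2 * (√(12 * ω + 1) + 1)) / 27 := by
  have hs : √(12 * ω + 1) ^ 2 = 12 * ω + 1 := Real.sq_sqrt hω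
  rw [Real.sqrt_pow_of_nonneg hω]
  linear_combination (-1/9) * hs

/-- At the tangency energy Ē₁ the cubic has a repeated positive root. -/
theorem stmt_10 (ω E : ℝ) (hω : 1/4 < ω)
    (hE : E = (1/27) * (36 * ω - Real.sqrt ((12 * ω + 1)^3) - 1)) :
    ∃ t₀ > (0 : ℝ),
      t₀^3 + (1/2 - 2 * ω) * t₀^2 - E * t₀ + E^2 / 2 = 0 ∧
      3 * t₀^2 + 2 * (1/2 - 2 * ω) * t₀ - E = 0 := by
  set s := √(12 * ω + 1)
  have hs : s ^ 2 = 12 * ω + 1 := Real.sq_sqrt (by linarith)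
  have two_lt_s : 2 < s := (Real.lt_sqrt zero_le_two).2 (by linarith)
  rw [tangency_energy_eq ω (by linarith)] at hE
  have ht₀ : 0 < (s - 2) * (s + 1) / 9 := by
    have : 0 < s - 2 := by linarith
    positivity
  exact ⟨_, ht₀, cubic_double_root_of_sq_eq s ω E hs hE⟩
end

section
/- For ω > ε²/4 (ε ∈ (0,1]) and Ê = Ē₂ := (1/27)(36ε²ω − (ε²(12ω + ε²)³)^{1/2} − ε⁴), the cubic t³ + (ε²/2 − 2ω)t² − Ē₂ t + Ē₂²/(2ε²) has a repeated positive root. -/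
/-!
Write `a = ε²/2 - 2ω` and `p(t) = t³ + a t² - E t + E²/(2ε²)`. Choosing `E = t (3t + 2a)` makes
`p'(t) = 0` automatically, and then `2ε² p(t) = t² ((3t + 2a)² - 2ε² (2t + a))`. So `t` is a double
root as soon as it solves the quadratic `9t² - 2(12ω - ε²) t + 4ω(4ω - ε²) = 0`, whose discriminant
is `4ε²(12ω + ε²)`. Its smaller root `t₀ = (12ω - ε² - ε√(12ω + ε²))/9` is positive exactly when
`ε² < 4ω`, and `t₀ (3t₀ + 2a)` is the energy `Ē₂`.
-/

namespace TangencyCubic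

theorem sqrt_sq_mul_pow_three {x y : ℝ} (hx : 0 ≤ x) (hy : 0 ≤ y) :
    Real.sqrt (x ^ 2 * y ^ 3) = x * Real.sqrt y ^ 3 := by
  have hsq : x ^ 2 * y ^ 3 = (x * Real.sqrt y ^ 3) ^ 2 := by
    rw [mul_pow, ← pow_mul, mul_comm 3 2, pow_mul, Real.sq_sqrt hy]
  rw [hsq, Real.sqrt_sq (by positivity)]

theorem cubic_eq_zero_and_deriv_eq_zero {a ε t E : ℝ} (hε : ε ≠ 0)
    (hE : E = t * (3 * t + 2 * a)) (hquad : (3 * t + 2 * a) ^ 2 = 2 * ε ^ 2 * (2 * t + a)) :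
    t ^ 3 + a * t ^ 2 - E * t + E ^ 2 / (2 * ε ^ 2) = 0 ∧ 3 * t ^ 2 + 2 * a * t - E = 0 := by
  subst hE
  constructor
  · have hcubic : t ^ 3 + a * t ^ 2 - t * (3 * t + 2 * a) * t + (t * (3 * t + 2 * a)) ^ 2 / (2 * ε ^ 2)
        = t ^ 2 * ((3 * t + 2 * a) ^ 2 - 2 * ε ^ 2 * (2 * t + a)) / (2 * ε ^ 2) := by
      field_simp
      ring
    rw [hcubic, hquad, sub_self, mul_zero, zero_div]
  · ring

theorem smaller_root_pos {ω ε q : ℝ} (hε : 0 < ε) (hω : ε ^ 2 / 4 < ω) (hq0 : 0 ≤ q)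
    (hq : q ^ 2 = 12 * ω + ε ^ 2) : 0 < 12 * ω - ε ^ 2 - ε * q := by
  have hlin : 0 < 12 * ω - ε ^ 2 := by nlinarith
  have hsq : (ε * q) ^ 2 < (12 * ω - ε ^ 2) ^ 2 := by
    rw [mul_pow, hq]
    nlinarith
  have := (pow_lt_pow_iff_left₀ (by positivity) hlin.le two_ne_zero).mp hsq
  linarith

end TangencyCubic

open TangencyCubic in
theorem stmt_11_general (ω ε E : ℝ) (hε0 : 0 < ε) (hω : ε^2/4 < ω)
    (hE : E = (1/27) * (36 * ε^2 * ω - Real.sqrt (ε^2 * (12 * ω + ε^2)^3) - ε^4)) :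
    ∃ t₀ > (0 : ℝ),
      t₀^3 + (ε^2/2 - 2 * ω) * t₀^2 - E * t₀ + E^2 / (2 * ε^2) = 0 ∧
      3 * t₀^2 + 2 * (ε^2/2 - 2 * ω) * t₀ - E = 0 := by
  have hX : 0 ≤ 12 * ω + ε ^ 2 := by nlinarith
  set q := Real.sqrt (12 * ω + ε ^ 2)
  have hq : q ^ 2 = 12 * ω + ε ^ 2 := Real.sq_sqrt hX
  rw [sqrt_sq_mul_pow_three hε0.le hX] at hE
  refine ⟨(12 * ω - ε ^ 2 - ε * q) / 9,
    div_pos (smaller_root_pos hε0 hω (Real.sqrt_nonneg _) hq) (by norm_num), ?_⟩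
  apply cubic_eq_zero_and_deriv_eq_zero hε0.ne'
  · rw [hE]
    linear_combination (-(1 / 27) * ε * q - (1 / 27) * ε ^ 2) * hq
  · linear_combination (ε ^ 2 / 9) * hq

/-- At the tangency energy Ē₂ the cubic for the second defect has a
repeated positive root. -/
theorem stmt_11 (ω ε E : ℝ) (hε0 : 0 < ε) (hε1 : ε ≤ 1) (hω : ε^2/4 < ω)
    (hE : E = (1/27) * (36 * ε^2 * ω - Real.sqrt (ε^2 * (12 * ω + ε^2)^3) - ε^4)) :
    ∃ t₀ > (0 : ℝ),
      t₀^3 + (ε^2/2 - 2 * ω) * t₀^2 - E * t₀ + E^2 / (2 * ε^2) = 0 ∧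
      3 * t₀^2 + 2 * (ε^2/2 - 2 * ω) * t₀ - E = 0 :=
  stmt_11_general ω ε E hε0 hω hE
end

section
/- Let ω > 1/4 and Ê ∈ (Ē₁, 0) where Ē₁ = (1/27)(36ω − ((12ω+1)³)^{1/2} − 1). Then the cubic t³ + (1/2 − 2ω)t² − Ê t + Ê²/2 = 0 has two distinct positive real roots. -/
/-!
Write the cubic as `p t = t³ + b t² + c t + d` with `b = 1/2 - 2ω < 0`, `c = -Ê > 0`, `d = Ê²/2 > 0`.
Then `p 0 = d > 0` and `p (-b) = d - b c > 0`, while the local minimum `t₀ = (√(b² - 3c) - b)/3`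
lies in `(0, -b)`. Its value is negative exactly when the discriminant of `p` is positive, and for
these coefficients the discriminant is `Ê²/108 · ((12ω+1)³ - (36ω - 1 - 27Ê)²)`, which is positive
precisely for `Ê > Ē₁`. Two sign changes give two distinct positive roots.
-/

open Set

lemma exists_zero_mem_Ioo_of_sign_changes {f : ℝ → ℝ} {a c b : ℝ} (hac : a < c) (hcb : c < b)
    (hf : ContinuousOn f (Icc a b)) (ha : 0 < f a) (hc : f c < 0) (hb : 0 < f b) :
    ∃ x ∈ Ioo a c, ∃ y ∈ Ioo c b, f x = 0 ∧ f y = 0 := by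
  obtain ⟨x, hx, hfx⟩ := intermediate_value_Ioo' hac.le
    (hf.mono (Icc_subset_Icc_right hcb.le)) ⟨hc, ha⟩
  obtain ⟨y, hy, hfy⟩ := intermediate_value_Ioo hcb.le
    (hf.mono (Icc_subset_Icc_left hac.le)) ⟨hc, hb⟩
  exact ⟨x, hx, y, hy, hfx, hfy⟩

namespace Cubic

lemma discr_monic (b c d : ℝ) :
    (⟨1, b, c, d⟩ : Cubic ℝ).discr = b^2*c^2 - 4*c^3 - 4*b^3*d - 27*d^2 + 18*b*c*d := by
  simp [discr]

/-- `(s - b)/3` is the local minimum of the cubic. -/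
lemma eval_critical (b c d s : ℝ) (hs : s^2 = b^2 - 3*c) :
    27 * (((s - b)/3)^3 + b * ((s - b)/3)^2 + c * ((s - b)/3) + d)
      = 27*d - 9*b*c + 2*b^3 - 2*s^3 := by
  linear_combination 3 * s * hs

lemma exists_mem_Ioo_eval_neg_of_discr_pos {b c d : ℝ} (hb : b < 0) (hc : 0 < c)
    (hΔ : 0 < (⟨1, b, c, d⟩ : Cubic ℝ).discr) :
    ∃ t ∈ Ioo 0 (-b), t^3 + b * t^2 + c * t + d < 0 := by
  rw [discr_monic] at hΔ
  have hdisc : 4 * (b^2 - 3*c)^3 - (27*d - 9*b*c + 2*b^3)^2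
      = 27 * (b^2*c^2 - 4*c^3 - 4*b^3*d - 27*d^2 + 18*b*c*d) := by ring
  have hq : 0 < b^2 - 3*c := by
    refine (Odd.pow_pos_iff (n := 3) (by decide)).1 ?_
    nlinarith [sq_nonneg (27*d - 9*b*c + 2*b^3)]
  set s := Real.sqrt (b^2 - 3*c)
  have hs : s^2 = b^2 - 3*c := Real.sq_sqrt hq.le
  have hs0 : 0 ≤ s := Real.sqrt_nonneg _
  have hsb : s < -b := by nlinarith
  have hmin : 27*d - 9*b*c + 2*b^3 < 2 * s^3 := by
    refine (le_abs_self _).trans_lt (abs_lt_of_sq_lt_sq ?_ (by positivity))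
    have h6 : (2 * s^3)^2 = 4 * (b^2 - 3*c)^3 := by rw [← hs]; ring
    nlinarith
  refine ⟨(s - b)/3, ⟨by linarith, by linarith⟩, ?_⟩
  nlinarith [eval_critical b c d s hs]

end Cubic

/-- For ω > 1/4 and E ∈ (Ē₁, 0) the cubic has two distinct positive roots. -/
theorem stmt_12 (ω E : ℝ) (hω : 1/4 < ω)
    (hE1 : (1/27) * (36 * ω - Real.sqrt ((12 * ω + 1)^3) - 1) < E) (hE0 : E < 0) :
    ∃ t₁ t₂ : ℝ, 0 < t₁ ∧ 0 < t₂ ∧ t₁ ≠ t₂ ∧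
      t₁^3 + (1/2 - 2 * ω) * t₁^2 - E * t₁ + E^2 / 2 = 0 ∧
      t₂^3 + (1/2 - 2 * ω) * t₂^2 - E * t₂ + E^2 / 2 = 0 := by
  set b := 1/2 - 2 * ω
  have hE : E ≠ 0 := hE0.ne
  have hb : b < 0 := by simp only [b]; linarith
  have hsq : (36 * ω - 1 - 27 * E)^2 < (12 * ω + 1)^3 :=
    (Real.lt_sqrt (by linarith)).1 (by linarith)
  have hΔ : 0 < (⟨1, b, -E, E^2 / 2⟩ : Cubic ℝ).discr := by
    rw [Cubic.discr_monic]
    have : 0 < E^2 / 108 * ((12 * ω + 1)^3 - (36 * ω - 1 - 27 * E)^2) :=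
      mul_pos (by positivity) (by linarith)
    convert this using 1
    ring
  obtain ⟨t₀, ⟨ht₀, ht₀b⟩, hneg⟩ := Cubic.exists_mem_Ioo_eval_neg_of_discr_pos hb (by linarith) hΔ
  obtain ⟨t₁, ⟨ht₁, ht₁₀⟩, t₂, ⟨ht₀₂, -⟩, hroot₁, hroot₂⟩ :=
    exists_zero_mem_Ioo_of_sign_changes (f := fun t => t^3 + b * t^2 - E * t + E^2 / 2)
      ht₀ ht₀b (by fun_prop) (by norm_num; positivity) (by simpa [sub_eq_add_neg] using hneg)
      (by nlinarith)
  exact ⟨t₁, t₂, ht₁, ht₀.trans ht₀₂, (ht₁₀.trans ht₀₂).ne, hroot₁, hroot₂⟩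
end

section
/- Let ω ≤ 1/4 and Ê ∈ (−ω²/2, 0). Then there is no u₁ > 0 with ωu₁² − u₁⁴/2 ≥ 0 satisfying u₁² − 2u₁√(ωu₁² − u₁⁴/2) = Ê. -/
/-! For `ω ≤ 1/4` the radicand satisfies `ω u² - u⁴/2 ≤ u²/4`, so `2 u √(ω u² - u⁴/2) ≤ u²`
and the landing value `u² - 2 u √(ω u² - u⁴/2)` is never negative. -/

theorem sqrt_mul_sq_sub_pow_four_le {ω : ℝ} (hω : ω ≤ 1/4) (u : ℝ) :
    √(ω * u^2 - u^4 / 2) ≤ |u| / 2 := by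
  rw [Real.sqrt_le_iff]
  refine ⟨by positivity, ?_⟩
  rw [div_pow, sq_abs]
  nlinarith [sq_nonneg u, pow_two_nonneg (u^2)]

theorem sq_sub_two_mul_mul_sqrt_nonneg {ω : ℝ} (hω : ω ≤ 1/4) (u : ℝ) :
    0 ≤ u^2 - 2 * u * √(ω * u^2 - u^4 / 2) := by
  have key : 2 * u * √(ω * u^2 - u^4 / 2) ≤ u^2 :=
    calc 2 * u * √(ω * u^2 - u^4 / 2)
        ≤ 2 * |u| * √(ω * u^2 - u^4 / 2) := by gcongr; exact le_abs_self u
      _ ≤ 2 * |u| * (|u| / 2) := by gcongr; exact sqrt_mul_sq_sub_pow_four_le hω u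
      _ = u^2 := by rw [← sq_abs u]; ring
  linarith

theorem stmt_13_general (ω E : ℝ) (hω : ω ≤ 1/4) (hE0 : E < 0) :
    ¬ ∃ u₁ : ℝ, 0 < u₁ ∧ 0 ≤ ω * u₁^2 - u₁^4 / 2 ∧
      u₁^2 - 2 * u₁ * Real.sqrt (ω * u₁^2 - u₁^4 / 2) = E := by
  rintro ⟨u, -, -, hE⟩
  linarith [sq_sub_two_mul_mul_sqrt_nonneg hω u]

/-- For ω ≤ 1/4 and E ∈ (−ω²/2, 0) there is no positive u₁ satisfying
the first jump condition. -/
theorem stmt_13 (ω E : ℝ) (hω : ω ≤ 1/4) (hE1 : -ω^2/2 < E) (hE0 : E < 0) :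
    ¬ ∃ u₁ : ℝ, 0 < u₁ ∧ 0 ≤ ω * u₁^2 - u₁^4 / 2 ∧
      u₁^2 - 2 * u₁ * Real.sqrt (ω * u₁^2 - u₁^4 / 2) = E :=
  stmt_13_general ω E hω hE0
end
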